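/- arXiv:2008.11829 — 5 statements merged into one kernel-verified Lean document; each statement's English description precedes it below -/
import Mathlib

section
/- Let C ⊆ ℝⁿ be nonempty, let a ∈ ℝⁿ with aᵢ > 0 for all i, let b ∈ ℝⁿ, and let f : ℝ → ℝ be convex. Suppose that for every family of separable convex objectives the exchange optimality condition holds for minimization over C: a point x ∈ C minimizes ∑ᵢ φᵢ(xᵢ) over C if and only if for every exchangeable pair (i,k) at x one has φₖ⁺(xₖ) ≥ φᵢ⁻(xᵢ). If x ∈ C minimizes the quadratic objective ∑ᵢ aᵢ·(1/2)(xᵢ/aᵢ + bᵢ)², then x also minimizes the (a,b,f)-separable objective ∑ᵢ aᵢ·f(xᵢ/aᵢ + bᵢ) over C. -/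
/-- Left derivative of `g` at `x`. -/
noncomputable def leftDeriv (g : ℝ → ℝ) (x : ℝ) : ℝ := derivWithin g (Set.Iio x) x

/-- Right derivative of `g` at `x`. -/
noncomputable def rightDeriv (g : ℝ → ℝ) (x : ℝ) : ℝ := derivWithin g (Set.Ioi x) x

/-- `(i,k)` is an exchangeable pair at `x ∈ C`: one can shift a small positive amount
from coordinate `i` to coordinate `k` while staying in `C`. -/
def ExchPair {n : ℕ} (C : Set (Fin n → ℝ)) (x : Fin n → ℝ) (i k : Fin n) : Prop :=
  i ≠ k ∧ ∃ ε : ℝ, 0 < ε ∧ x + ε • (Pi.single k 1 - Pi.single i 1) ∈ C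


/-! Both one-sided derivatives of the `i`-th quadratic term at `x i` equal `u i := x i / a i + b i`,
so the exchange condition for the quadratic objective says `u i ≤ u k` for every exchangeable
pair `(i, k)`. The one-sided derivatives of the `i`-th `f`-term are `f⁻ (u i)` and `f⁺ (u i)`, and
`f⁻ u ≤ f⁺ v` whenever `u ≤ v`, so the exchange condition for the `f`-objective follows. -/

open Set

section OneSidedDeriv

variable {g : ℝ → ℝ}

lemma HasDerivAt.leftDeriv_eq {d x : ℝ} (h : HasDerivAt g d x) : leftDeriv g x = d :=
  h.hasDerivWithinAt.derivWithin (uniqueDiffWithinAt_Iio x)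

lemma HasDerivAt.rightDeriv_eq {d x : ℝ} (h : HasDerivAt g d x) : rightDeriv g x = d :=
  h.hasDerivWithinAt.derivWithin (uniqueDiffWithinAt_Ioi x)

lemma ConvexOn.leftDeriv_le_rightDeriv (hg : ConvexOn ℝ univ g) {u v : ℝ} (huv : u ≤ v) :
    leftDeriv g u ≤ rightDeriv g v :=
  (hg.leftDeriv_le_rightDeriv_of_mem_interior (by simp)).trans
    (hg.monotoneOn_rightDeriv (by simp) (by simp) huv)

variable (g)

/-- No regularity of `g` is needed: `t ↦ t / c + β` is an increasing affine homeomorphism, so both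
sides are the junk value `0` simultaneously. -/
lemma leftDeriv_comp_affine {c : ℝ} (hc : 0 < c) (β s : ℝ) :
    leftDeriv (fun t => c * g (t / c + β)) s = leftDeriv g (s / c + β) := by
  rw [leftDeriv, derivWithin_const_mul_field]
  simp only [div_eq_inv_mul]
  rw [derivWithin_comp_mul_left c⁻¹ (fun u => g (u + β)), derivWithin_comp_add_const,
    LinearOrderedField.smul_Iio (inv_pos.2 hc), ← image_vadd]
  simp only [vadd_eq_add, image_const_add_Iio, smul_eq_mul]
  rw [add_comm β, mul_inv_cancel_left₀ hc.ne', leftDeriv]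

lemma rightDeriv_comp_affine {c : ℝ} (hc : 0 < c) (β s : ℝ) :
    rightDeriv (fun t => c * g (t / c + β)) s = rightDeriv g (s / c + β) := by
  rw [rightDeriv, derivWithin_const_mul_field]
  simp only [div_eq_inv_mul]
  rw [derivWithin_comp_mul_left c⁻¹ (fun u => g (u + β)), derivWithin_comp_add_const,
    LinearOrderedField.smul_Ioi (inv_pos.2 hc), ← image_vadd]
  simp only [vadd_eq_add, image_const_add_Ioi, smul_eq_mul]
  rw [add_comm β, mul_inv_cancel_left₀ hc.ne', rightDeriv]

end OneSidedDeriv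

lemma ConvexOn.const_mul_comp_affine {g : ℝ → ℝ} (hg : ConvexOn ℝ univ g) {c : ℝ} (hc : 0 ≤ c)
    (β : ℝ) : ConvexOn ℝ univ (fun t => c * g (t / c + β)) := by
  have h := ((hg.translate_right β).comp_linearMap (c⁻¹ • LinearMap.id)).smul hc
  rw [preimage_univ, preimage_univ] at h
  refine h.congr fun t _ => ?_
  simp [add_comm, div_eq_inv_mul]

lemma convexOn_half_sq : ConvexOn ℝ univ (fun u : ℝ => 1 / 2 * u ^ 2) := by
  simpa only [smul_eq_mul] using even_two.convexOn_pow.smul (by norm_num : (0 : ℝ) ≤ 1 / 2)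

lemma hasDerivAt_half_sq (u : ℝ) : HasDerivAt (fun u : ℝ => 1 / 2 * u ^ 2) u u := by
  simpa using ((hasDerivAt_pow 2 u).const_mul (1 / 2 : ℝ))

theorem reduction_to_quadratic_general {n : ℕ} (C : Set (Fin n → ℝ))
    (a b : Fin n → ℝ) (ha : ∀ i, 0 < a i) (f : ℝ → ℝ) (hf : ConvexOn ℝ Set.univ f)
    -- the exchange optimality condition holds for every separable convex objective over C
    (hcond : ∀ φ : Fin n → ℝ → ℝ, (∀ i, ConvexOn ℝ Set.univ (φ i)) →
      ∀ x ∈ C, (IsMinOn (fun y => ∑ i, φ i (y i)) C x ↔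
        ∀ i k, ExchPair C x i k → leftDeriv (φ i) (x i) ≤ rightDeriv (φ k) (x k)))
    (x : Fin n → ℝ) (hx : x ∈ C)
    (hquad : IsMinOn (fun y => ∑ i, a i * ((1 : ℝ) / 2 * (y i / a i + b i) ^ 2)) C x) :
    IsMinOn (fun y => ∑ i, a i * f (y i / a i + b i)) C x := by
  have hquad_conv : ∀ i, ConvexOn ℝ univ (fun t => a i * (1 / 2 * (t / a i + b i) ^ 2)) :=
    fun i => convexOn_half_sq.const_mul_comp_affine (ha i).le (b i)
  have hf_conv : ∀ i, ConvexOn ℝ univ (fun t => a i * f (t / a i + b i)) :=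
    fun i => hf.const_mul_comp_affine (ha i).le (b i)
  have hexch : ∀ i k, ExchPair C x i k → x i / a i + b i ≤ x k / a k + b k := by
    intro i k hik
    have h := (hcond _ hquad_conv x hx).1 hquad i k hik
    rwa [leftDeriv_comp_affine (fun u => 1 / 2 * u ^ 2) (ha i),
      rightDeriv_comp_affine (fun u => 1 / 2 * u ^ 2) (ha k),
      (hasDerivAt_half_sq _).leftDeriv_eq, (hasDerivAt_half_sq _).rightDeriv_eq] at h
  refine (hcond _ hf_conv x hx).2 fun i k hik => ?_
  rw [leftDeriv_comp_affine _ (ha i), rightDeriv_comp_affine _ (ha k)]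
  exact hf.leftDeriv_le_rightDeriv (hexch i k hik)

theorem reduction_to_quadratic {n : ℕ} (C : Set (Fin n → ℝ)) (hC : C.Nonempty)
    (a b : Fin n → ℝ) (ha : ∀ i, 0 < a i) (f : ℝ → ℝ) (hf : ConvexOn ℝ Set.univ f)
    -- the exchange optimality condition holds for every separable convex objective over C
    (hcond : ∀ φ : Fin n → ℝ → ℝ, (∀ i, ConvexOn ℝ Set.univ (φ i)) →
      ∀ x ∈ C, (IsMinOn (fun y => ∑ i, φ i (y i)) C x ↔
        ∀ i k, ExchPair C x i k → leftDeriv (φ i) (x i) ≤ rightDeriv (φ k) (x k)))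
    (x : Fin n → ℝ) (hx : x ∈ C)
    (hquad : IsMinOn (fun y => ∑ i, a i * ((1 : ℝ) / 2 * (y i / a i + b i) ^ 2)) C x) :
    IsMinOn (fun y => ∑ i, a i * f (y i / a i + b i)) C x :=
  reduction_to_quadratic_general C a b ha f hf hcond x hx hquad
end

section
/- In Algorithm 1, if x̄ᵢᵗ > zᵢ at some step t, then zᵢ ≤ x̄ᵢᵗ' ≤ x̄ᵢᵗ for all t' > t; symmetrically, if x̄ᵢᵗ < zᵢ then zᵢ ≥ x̄ᵢᵗ' ≥ x̄ᵢᵗ for all t' > t; and if x̄ᵢᵗ = zᵢ then x̄ᵢᵗ' = zᵢ for all t' > t. In particular, each coordinate moves monotonically toward its target value zᵢ and never overshoots it. -/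
/-!
Each transfer moves mass `λ` from a coordinate above its target to one below it, and
`λ` is capped by both gaps, so every coordinate of the new point lies between its old
value and its target. Lying between the current point and `z` is transitive, because the
interval `[[a j, z j]]` contains `[[b j, z j]]` whenever it contains `b j`.
-/

open Set
open scoped Interval

def MovesToward {ι α : Type*} [Lattice α] (z a b : ι → α) : Prop :=
  ∀ j, b j ∈ [[a j, z j]]

instance MovesToward.instIsTrans {ι α : Type*} [DistribLattice α] (z : ι → α) :
    IsTrans (ι → α) (MovesToward z) where
  trans _ _ _ hab hbc j := uIcc_subset_uIcc (hab j) right_mem_uIcc (hbc j)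

theorem movesToward_add_smul_single_sub_single {ι α : Type*} [DecidableEq ι] [Ring α]
    [LinearOrder α] [IsOrderedAddMonoid α] {z x : ι → α} {i k : ι} {c : α} (hc : 0 ≤ c)
    (hci : c ≤ x i - z i) (hck : c ≤ z k - x k) :
    MovesToward z x (x + c • (Pi.single k 1 - Pi.single i 1)) := by
  intro j
  simp only [Pi.add_apply, Pi.smul_apply, Pi.sub_apply, Pi.single_apply, smul_eq_mul]
  split_ifs with hjk hji hji <;>
    simp only [sub_self, sub_zero, zero_sub, mul_zero, mul_one, mul_neg, add_zero,
      ← sub_eq_add_neg]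
  · exact left_mem_uIcc
  · subst hjk
    exact Icc_subset_uIcc ⟨le_add_of_nonneg_right hc, le_sub_iff_add_le'.mp hck⟩
  · subst hji
    exact Icc_subset_uIcc' ⟨le_sub_comm.mp hci, sub_le_self _ hc⟩
  · exact left_mem_uIcc

theorem algorithm_monotone_toward_target_general {n : ℕ} (z : Fin n → ℝ)
    (xbar : ℕ → Fin n → ℝ)
    (hstep : ∀ t : ℕ,
      xbar (t + 1) = xbar t ∨
      ∃ i k : Fin n, xbar t i > z i ∧ xbar t k < z k ∧
        xbar (t + 1)
          = xbar t + min (xbar t i - z i) (z k - xbar t k) •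
              (Pi.single k (1 : ℝ) - Pi.single i (1 : ℝ))) :
    ∀ t : ℕ, ∀ i : Fin n,
      (xbar t i > z i → ∀ t' > t, z i ≤ xbar t' i ∧ xbar t' i ≤ xbar t i) ∧
      (xbar t i < z i → ∀ t' > t, xbar t i ≤ xbar t' i ∧ xbar t' i ≤ z i) ∧
      (xbar t i = z i → ∀ t' > t, xbar t' i = z i) := by
  have hsucc : ∀ t, MovesToward z (xbar t) (xbar (t + 1)) := by
    intro t
    rcases hstep t with hstay | ⟨i, k, hi, hk, hmove⟩
    · exact hstay ▸ fun j => left_mem_uIcc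
    · rw [hmove]
      exact movesToward_add_smul_single_sub_single (le_min (sub_nonneg.2 hi.le) (sub_nonneg.2 hk.le))
        (min_le_left _ _) (min_le_right _ _)
  intro t i
  have hbetween : ∀ t' > t, xbar t' i ∈ [[xbar t i, z i]] := fun t' ht' =>
    Nat.rel_of_forall_rel_succ_of_lt (MovesToward z) hsucc ht' i
  refine ⟨fun hgt t' ht' => ?_, fun hlt t' ht' => ?_, fun heq t' ht' => ?_⟩
  · simpa only [uIcc_of_gt hgt, mem_Icc] using hbetween t' ht'
  · simpa only [uIcc_of_lt hlt, mem_Icc] using hbetween t' ht'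
  · simpa only [heq, uIcc_self, mem_singleton_iff] using hbetween t' ht'

theorem algorithm_monotone_toward_target {n : ℕ} (x z : Fin n → ℝ)
    (xbar : ℕ → Fin n → ℝ) (h0 : xbar 0 = x)
    (hstep : ∀ t : ℕ,
      xbar (t + 1) = xbar t ∨
      ∃ i k : Fin n, xbar t i > z i ∧ xbar t k < z k ∧
        xbar (t + 1)
          = xbar t + min (xbar t i - z i) (z k - xbar t k) •
              (Pi.single k (1 : ℝ) - Pi.single i (1 : ℝ))) :
    ∀ t : ℕ, ∀ i : Fin n,
      (xbar t i > z i → ∀ t' > t, z i ≤ xbar t' i ∧ xbar t' i ≤ xbar t i) ∧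
      (xbar t i < z i → ∀ t' > t, xbar t i ≤ xbar t' i ∧ xbar t' i ≤ z i) ∧
      (xbar t i = z i → ∀ t' > t, xbar t' i = z i) :=
  algorithm_monotone_toward_target_general z xbar hstep
end

section
/- Let x, z ∈ ℝⁿ with ∑ᵢ xᵢ = ∑ᵢ zᵢ. Then z - x can be written as a finite nonnegative combination ∑_{(i,k)} λ_{ik}(eᵏ - eⁱ) with λ_{ik} ≥ 0, where λ_{ik} > 0 only if xᵢ > zᵢ and xₖ < zₖ. -/
/-!
With `d = z - x`, the positive and negative parts `d⁺`, `d⁻` have the same total mass `S`.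
Transporting mass out of every coordinate `i` with `dᵢ < 0` into the coordinates `k` with
`dₖ > 0`, proportionally to `d⁺ₖ`, gives the coefficients `λᵢₖ = d⁻ᵢ d⁺ₖ / S`.
-/

open Finset

section

variable {ι : Type*} [Fintype ι]

theorem sum_posPart_eq_sum_negPart {d : ι → ℝ} (hd : ∑ i, d i = 0) :
    ∑ i, d⁺ i = ∑ i, d⁻ i := by
  rw [← sub_eq_zero, ← sum_sub_distrib]
  simpa using hd

variable [DecidableEq ι]

theorem sum_sum_mul_smul_single_sub_single (a b : ι → ℝ) :
    ∑ i, ∑ k, (a i * b k) • (Pi.single k (1 : ℝ) - Pi.single i (1 : ℝ)) =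
      (∑ i, a i) • b - (∑ k, b k) • a := by
  ext j
  simp [Finset.sum_apply, Pi.single_apply, mul_sub, sum_sub_distrib, mul_sum, mul_comm]

theorem exists_conic_combination_of_sum_eq_zero {d : ι → ℝ} (hd : ∑ i, d i = 0) :
    ∃ lam : ι → ι → ℝ, (∀ i k, 0 ≤ lam i k) ∧ (∀ i k, 0 < lam i k → d i < 0 ∧ 0 < d k) ∧
      d = ∑ i, ∑ k, lam i k • (Pi.single k (1 : ℝ) - Pi.single i (1 : ℝ)) := by
  set S := ∑ i, d⁺ i with hS_def
  have hS : 0 ≤ S := sum_nonneg fun i _ => posPart_nonneg (d i)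
  refine ⟨fun i k => (S⁻¹ • d⁻) i * d⁺ k, fun i k => ?_, fun i k hlam => ⟨?_, ?_⟩, ?_⟩
  · exact mul_nonneg (mul_nonneg (inv_nonneg.2 hS) (negPart_nonneg _)) (posPart_nonneg _)
  · by_contra! hi
    simp [negPart_eq_zero.2 hi] at hlam
  · by_contra! hk
    simp [posPart_eq_zero.2 hk] at hlam
  · have hsum_neg : ∑ i, (S⁻¹ • d⁻) i = S⁻¹ * S := by
      simp [← mul_sum, sum_posPart_eq_sum_negPart hd, S]
    rw [sum_sum_mul_smul_single_sub_single, hsum_neg, ← hS_def]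
    rcases eq_or_ne S 0 with hS0 | hS0
    · have hpos : d⁺ = 0 := (Fintype.sum_eq_zero_iff_of_nonneg (posPart_nonneg d)).1 hS0
      have hneg : d⁻ = 0 := (Fintype.sum_eq_zero_iff_of_nonneg (negPart_nonneg d)).1
        (sum_posPart_eq_sum_negPart hd ▸ hS0)
      rw [← posPart_sub_negPart d, hpos, hneg]
      simp
    · rw [inv_mul_cancel₀ hS0, one_smul, smul_inv_smul₀ hS0, posPart_sub_negPart]

end

theorem diff_conic_combination {n : ℕ} (x z : Fin n → ℝ)
    (hsum : ∑ i, x i = ∑ i, z i) :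
    ∃ lam : Fin n → Fin n → ℝ,
      (∀ i k, 0 ≤ lam i k) ∧
      (∀ i k, 0 < lam i k → x i > z i ∧ x k < z k) ∧
      z - x = ∑ i, ∑ k, lam i k • (Pi.single k (1 : ℝ) - Pi.single i (1 : ℝ)) := by
  obtain ⟨lam, hnonneg, hsupp, hdiff⟩ :=
    exists_conic_combination_of_sum_eq_zero (d := z - x) (by simp [sum_sub_distrib, hsum])
  refine ⟨lam, hnonneg, fun i k hlam => ?_, hdiff⟩
  obtain ⟨hi, hk⟩ := hsupp i k hlam
  exact ⟨sub_neg.1 hi, sub_pos.1 hk⟩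
end

section
/- Consider minimization of ∑ᵢ φᵢ(xᵢ) over the laminar-constrained set C' := {x ∈ ℝⁿ : ∑ᵢ xᵢ = R, Lⱼ ≤ ∑_{i∈Nⱼ} xᵢ ≤ Uⱼ for all j}, with each φᵢ convex. If x ∈ C' satisfies φₖ⁺(xₖ) ≥ φᵢ⁻(xᵢ) for every exchangeable pair (i,k) ∈ E_{C'}(x), then x is optimal: ∑ᵢ φᵢ(zᵢ) ≥ ∑ᵢ φᵢ(xᵢ) for every z ∈ C'. -/
/-!
Put `d = z - x`. Adding the singletons to the blocks keeps the family laminar, and then, as long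
as `d ≠ 0`, some pair `i ≠ k` has every block separating them with `d`-sum of the sign of `d` at
the element it contains (in particular `dᵢ < 0 < dₖ`). Such a pair is exchangeable at `x`, and
moving `d` towards `0` along `eᵢ - eₖ` as far as the separating blocks allow drives one more block
sum to `0` without changing any sign. Hence `d` is a nonnegative combination of exchangeable
directions `eₖ - eᵢ`, so `⟨g, d⟩ ≥ 0` for the subgradient `gₚ = φₚ⁻(xₚ)` if `dₚ < 0` and
`gₚ = φₚ⁺(xₚ)` otherwise; the subgradient inequality `φₚ(zₚ) ≥ φₚ(xₚ) + gₚ dₚ` finishes.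
-/

open Finset

namespace ConvexOn

variable {f : ℝ → ℝ} {x y : ℝ}

theorem add_rightDeriv_mul_sub_le (hf : ConvexOn ℝ Set.univ f) (hxy : x ≤ y) :
    f x + rightDeriv f x * (y - x) ≤ f y := by
  rcases hxy.eq_or_lt with rfl | hxy
  · simp
  have h := hf.rightDeriv_le_slope_of_mem_interior (by simp) (Set.mem_univ y) hxy
  rw [slope_def_field, le_div_iff₀ (sub_pos.2 hxy)] at h
  unfold rightDeriv
  linarith

theorem add_leftDeriv_mul_sub_le (hf : ConvexOn ℝ Set.univ f) (hyx : y ≤ x) :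
    f x + leftDeriv f x * (y - x) ≤ f y := by
  rcases hyx.eq_or_lt with rfl | hyx
  · simp
  have h := hf.slope_le_leftDeriv_of_mem_interior (Set.mem_univ y) (by simp) hyx
  rw [slope_def_field, div_le_iff₀ (sub_pos.2 hyx)] at h
  unfold leftDeriv
  linarith

end ConvexOn

theorem Finset.card_filter_ne_zero_lt {β : Type*} (s : Finset β) {f f' : β → ℝ}
    (hf' : ∀ b ∈ s, f' b ∈ Set.uIcc 0 (f b)) (hb : ∃ b ∈ s, f b ≠ 0 ∧ f' b = 0) :
    #{b ∈ s | f' b ≠ 0} < #{b ∈ s | f b ≠ 0} := by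
  obtain ⟨b, hbs, hfb, hf'b⟩ := hb
  refine card_lt_card ((ssubset_iff_of_subset fun c hc => ?_).2 ⟨b, ?_, ?_⟩)
  · simp only [mem_filter] at hc ⊢
    refine ⟨hc.1, fun hfc => hc.2 ?_⟩
    simpa [hfc] using hf' c hc.1
  · simp [hbs, hfb]
  · simp [hf'b]

section Laminar

variable {α : Type*}

def IsLaminar (𝒮 : Finset (Finset α)) : Prop :=
  ∀ S ∈ 𝒮, ∀ T ∈ 𝒮, Disjoint S T ∨ S ⊆ T ∨ T ⊆ S

/-- For `d = z - x`, these are the pairs along which `x` can shift a little mass from `i` to `k`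
while each block sum stays between those of `x` and `z`. -/
def IsExchangePair (𝒮 : Finset (Finset α)) (d : α → ℝ) (i k : α) : Prop :=
  i ≠ k ∧ ∀ S ∈ 𝒮, (k ∈ S → i ∉ S → 0 < ∑ p ∈ S, d p) ∧ (i ∈ S → k ∉ S → ∑ p ∈ S, d p < 0)

theorem IsExchangePair.of_forall_mem_uIcc {𝒮 : Finset (Finset α)} {d d' : α → ℝ} {i k : α}
    (h : IsExchangePair 𝒮 d' i k)
    (hd' : ∀ S ∈ 𝒮, ∑ p ∈ S, d' p ∈ Set.uIcc 0 (∑ p ∈ S, d p)) : IsExchangePair 𝒮 d i k := by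
  refine ⟨h.1, fun S hS => ⟨fun hkS hiS => ?_, fun hiS hkS => ?_⟩⟩
  · have := (h.2 S hS).1 hkS hiS
    rcases Set.mem_uIcc.1 (hd' S hS) with h' | h' <;> linarith [h'.1, h'.2]
  · have := (h.2 S hS).2 hiS hkS
    rcases Set.mem_uIcc.1 (hd' S hS) with h' | h' <;> linarith [h'.1, h'.2]

def blockPolytope {ι : Type*} [Fintype α] (N : ι → Finset α) (R : ℝ) (L U : ι → ℝ) :
    Set (α → ℝ) :=
  {y | ∑ p, y p = R ∧ ∀ j, L j ≤ ∑ p ∈ N j, y p ∧ ∑ p ∈ N j, y p ≤ U j}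

variable [DecidableEq α]

theorem isLaminar_image {ι : Type*} [Fintype ι] {N : ι → Finset α}
    (hN : ∀ j l, N j ∩ N l = ∅ ∨ N j ⊆ N l ∨ N l ⊆ N j) : IsLaminar (univ.image N) := by
  simp only [IsLaminar, mem_image, mem_univ, true_and, forall_exists_index,
    forall_apply_eq_imp_iff]
  intro j l
  rw [disjoint_iff_inter_eq_empty]
  exact hN j l

theorem IsLaminar.union_singletons [Fintype α] {𝒮 : Finset (Finset α)} (h𝒮 : IsLaminar 𝒮) :
    IsLaminar (𝒮 ∪ univ.image singleton) := by
  have hsingle : ∀ p (T : Finset α), Disjoint {p} T ∨ {p} ⊆ T ∨ T ⊆ {p} := fun p T => by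
    by_cases hp : p ∈ T
    · exact .inr (.inl (singleton_subset_iff.2 hp))
    · exact .inl (disjoint_singleton_left.2 hp)
  simp only [IsLaminar, mem_union, mem_image, mem_univ, true_and]
  rintro S (hS | ⟨p, rfl⟩) T (hT | ⟨q, rfl⟩)
  · exact h𝒮 S hS T hT
  · rcases hsingle q S with h | h | h
    exacts [.inl h.symm, .inr (.inr h), .inr (.inl h)]
  · exact hsingle p T
  · exact hsingle p {q}

theorem IsLaminar.card_filter_mem_lt {𝒮 : Finset (Finset α)} (h𝒮 : IsLaminar 𝒮) {S : Finset α}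
    (hS : S ∈ 𝒮) {a b c : α} (ha : a ∈ S) (hb : b ∉ S) (hc : c ∈ S) :
    #{T ∈ 𝒮 | a ∈ T ∧ b ∈ T} < #{T ∈ 𝒮 | a ∈ T ∧ c ∈ T} := by
  refine card_lt_card ((ssubset_iff_of_subset fun T hT => ?_).2 ⟨S, ?_, ?_⟩)
  · simp only [mem_filter] at hT ⊢
    obtain ⟨hT, haT, hbT⟩ := hT
    refine ⟨hT, haT, ?_⟩
    rcases h𝒮 S hS T hT with h | h | h
    · exact absurd haT (disjoint_left.1 h ha)
    · exact h hc
    · exact absurd (h hbT) hb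
  · simp [hS, ha, hc]
  · simp [hb]

theorem IsLaminar.exists_isExchangePair [Fintype α] {𝒮 : Finset (Finset α)}
    (h𝒮 : IsLaminar 𝒮) {d : α → ℝ} (hd : ∑ p, d p = 0) (hd0 : d ≠ 0) :
    ∃ i k, IsExchangePair 𝒮 d i k := by
  obtain ⟨p, hp⟩ := Function.ne_iff.1 hd0
  obtain ⟨k, -, hk⟩ := exists_pos_of_sum_zero_of_exists_nonzero d hd ⟨p, mem_univ p, hp⟩
  obtain ⟨i, -, hi⟩ := exists_pos_of_sum_zero_of_exists_nonzero (-d)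
    (by simp [sum_neg_distrib, hd]) ⟨p, mem_univ p, by simpa using hp⟩
  replace hi : d i < 0 := by simpa using hi
  -- Among the pairs of a negative and a positive entry, take one lying in the most common blocks.
  obtain ⟨⟨i, k⟩, hik, hmax⟩ := exists_max_image
    {q : α × α | d q.1 < 0 ∧ 0 < d q.2} (fun q => #{T ∈ 𝒮 | q.1 ∈ T ∧ q.2 ∈ T})
    ⟨(i, k), by simpa using ⟨hi, hk⟩⟩
  simp only [mem_filter, mem_univ, true_and, Prod.forall] at hik hmax
  refine ⟨i, k, fun h => by linarith [h ▸ hik.1, hik.2],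
    fun S hS => ⟨fun hkS hiS => ?_, fun hiS hkS => ?_⟩⟩
  · refine sum_pos' (fun p hpS => not_lt.1 fun hp => ?_) ⟨k, hkS, hik.2⟩
    have := h𝒮.card_filter_mem_lt hS hkS hiS hpS
    simp only [and_comm (a := k ∈ _)] at this
    exact absurd (hmax p k ⟨hp, hik.2⟩) (not_le.2 this)
  · refine sum_neg' (fun p hpS => not_lt.1 fun hp => ?_) ⟨i, hiS, hik.1⟩
    exact absurd (hmax i p ⟨hik.1, hp⟩) (not_le.2 (h𝒮.card_filter_mem_lt hS hiS hkS hpS))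

theorem sum_add_single_sub_single (S : Finset α) (d : α → ℝ) (i k : α) (t : ℝ) :
    ∑ p ∈ S, (d + Pi.single i t - Pi.single k t : α → ℝ) p =
      ∑ p ∈ S, d p + (if i ∈ S then t else 0) - (if k ∈ S then t else 0) := by
  simp only [Pi.add_apply, Pi.sub_apply, sum_sub_distrib, sum_add_distrib, sum_pi_single']

theorem IsExchangePair.exists_shrink {𝒮 : Finset (Finset α)} {d : α → ℝ} {i k : α}
    (h : IsExchangePair 𝒮 d i k) (hi : {i} ∈ 𝒮) :
    ∃ t > 0, (∀ S ∈ 𝒮, ∑ p ∈ S, (d + Pi.single i t - Pi.single k t : α → ℝ) p ∈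
        Set.uIcc 0 (∑ p ∈ S, d p)) ∧
      ∃ S ∈ 𝒮, ∑ p ∈ S, d p ≠ 0 ∧ ∑ p ∈ S, (d + Pi.single i t - Pi.single k t : α → ℝ) p = 0 := by
  -- The step is the smallest absolute `d`-sum of a block separating `i` from `k`.
  obtain ⟨S₀, hS₀, hmin⟩ := exists_min_image {S ∈ 𝒮 | Xor (i ∈ S) (k ∈ S)}
    (fun S => |∑ p ∈ S, d p|) ⟨{i}, by simp [hi, xor_def, h.1.symm]⟩
  simp only [mem_filter, and_imp] at hS₀ hmin
  have hsep : ∀ S ∈ 𝒮, Xor (i ∈ S) (k ∈ S) → ∑ p ∈ S, d p ≠ 0 := by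
    rintro S hS (⟨hiS, hkS⟩ | ⟨hkS, hiS⟩)
    exacts [((h.2 S hS).2 hiS hkS).ne, ((h.2 S hS).1 hkS hiS).ne']
  refine ⟨_, abs_pos.2 (hsep S₀ hS₀.1 hS₀.2), fun S hS => ?_, S₀, hS₀.1, hsep S₀ hS₀.1 hS₀.2, ?_⟩
  · have ht := abs_nonneg (∑ p ∈ S₀, d p)
    rw [sum_add_single_sub_single, Set.mem_uIcc]
    by_cases hiS : i ∈ S <;> by_cases hkS : k ∈ S <;> simp only [hiS, hkS, if_true, if_false]
    · simpa using le_total 0 _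
    · have hneg := (h.2 S hS).2 hiS hkS
      have := hmin S hS (by simp [xor_def, hiS, hkS])
      rw [abs_of_neg hneg] at this
      exact .inr ⟨by linarith, by linarith⟩
    · have hpos := (h.2 S hS).1 hkS hiS
      have := hmin S hS (by simp [xor_def, hiS, hkS])
      rw [abs_of_pos hpos] at this
      exact .inl ⟨by linarith, by linarith⟩
    · simpa using le_total 0 _
  · rw [sum_add_single_sub_single]
    rcases hS₀.2 with ⟨hiS, hkS⟩ | ⟨hkS, hiS⟩
    · simp [hiS, hkS, abs_of_neg ((h.2 S₀ hS₀.1).2 hiS hkS)]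
    · simp [hiS, hkS, abs_of_pos ((h.2 S₀ hS₀.1).1 hkS hiS)]

theorem IsLaminar.sum_mul_nonneg_of_isExchangePair [Fintype α] {𝒮 : Finset (Finset α)}
    (h𝒮 : IsLaminar 𝒮) (hsingle : ∀ p, {p} ∈ 𝒮) {d g : α → ℝ} (hd : ∑ p, d p = 0)
    (hg : ∀ i k, IsExchangePair 𝒮 d i k → g i ≤ g k) : 0 ≤ ∑ p, g p * d p := by
  induction hμ : #{S ∈ 𝒮 | ∑ p ∈ S, d p ≠ 0} using Nat.strong_induction_on generalizing d with
  | _ μ ih =>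
  obtain rfl | hd0 := eq_or_ne d 0
  · simp
  obtain ⟨i, k, hik⟩ := h𝒮.exists_isExchangePair hd hd0
  obtain ⟨t, ht, hshrink, hdrop⟩ := hik.exists_shrink (hsingle i)
  have hd' : ∑ p, (d + Pi.single i t - Pi.single k t : α → ℝ) p = 0 := by
    rw [sum_add_single_sub_single]
    simp [hd]
  have hg' := ih _ (hμ ▸ card_filter_ne_zero_lt 𝒮 hshrink hdrop) hd'
    (fun i' k' h' => hg i' k' (h'.of_forall_mem_uIcc hshrink)) rfl
  calc 0 ≤ ∑ p, g p * (d + Pi.single i t - Pi.single k t : α → ℝ) p + t * (g k - g i) :=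
        add_nonneg hg' (mul_nonneg ht.le (sub_nonneg.2 (hg i k hik)))
    _ = ∑ p, g p * d p := by
      simp [mul_add, mul_sub, sum_add_distrib, sum_sub_distrib, Pi.single_apply]
      ring

theorem IsExchangePair.exists_add_smul_mem_blockPolytope [Fintype α] {ι : Type*}
    {N : ι → Finset α} {R : ℝ} {L U : ι → ℝ} {𝒮 : Finset (Finset α)} {x z : α → ℝ} {i k : α}
    (h : IsExchangePair 𝒮 (z - x) i k) (hN : ∀ j, N j ∈ 𝒮) (hi : {i} ∈ 𝒮)
    (hx : x ∈ blockPolytope N R L U) (hz : z ∈ blockPolytope N R L U) :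
    ∃ ε : ℝ, 0 < ε ∧ x + ε • (Pi.single k (1 : ℝ) - Pi.single i 1) ∈ blockPolytope N R L U := by
  obtain ⟨t, ht, hshrink, -⟩ := h.exists_shrink hi
  refine ⟨t, ht, ?_⟩
  -- The new point is `z - d'` with `d'` the shrunken `z - x`, so its block sums lie between
  -- those of `x` and `z`.
  have hy : x + t • (Pi.single k 1 - Pi.single i 1) =
      z - (z - x + Pi.single i t - Pi.single k t) := by
    ext p
    simp only [Pi.add_apply, Pi.smul_apply, Pi.sub_apply, Pi.single_apply, smul_eq_mul]
    split_ifs <;> ring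
  have hsum : ∀ S, ∑ p ∈ S, (z - (z - x + Pi.single i t - Pi.single k t) : α → ℝ) p =
      ∑ p ∈ S, z p - ∑ p ∈ S, (z - x + Pi.single i t - Pi.single k t : α → ℝ) p := fun S =>
    sum_sub_distrib _ _
  rw [hy]
  refine ⟨?_, fun j => Set.uIcc_subset_Icc (hx.2 j) (hz.2 j) ?_⟩
  · rw [hsum, sum_add_single_sub_single]
    simp [sum_sub_distrib, hx.1, hz.1]
  · have hd' := hshrink (N j) (hN j)
    rw [show ∑ p ∈ N j, (z - x) p = ∑ p ∈ N j, z p - ∑ p ∈ N j, x p from sum_sub_distrib _ _]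
      at hd'
    rw [hsum]
    generalize ∑ p ∈ N j, (z - x + Pi.single i t - Pi.single k t : α → ℝ) p = s at hd' ⊢
    rw [Set.mem_uIcc] at hd' ⊢
    rcases hd' with h' | h' <;> [left; right] <;> constructor <;> linarith [h'.1, h'.2]

end Laminar

theorem laminar_condition_sufficiency {n m : ℕ}
    (Nset : Fin m → Finset (Fin n))
    (hlam : ∀ j ℓ, Nset j ∩ Nset ℓ = ∅ ∨ Nset j ⊆ Nset ℓ ∨ Nset ℓ ⊆ Nset j)
    (R : ℝ) (L U : Fin m → ℝ)
    (φ : Fin n → ℝ → ℝ) (hφ : ∀ i, ConvexOn ℝ Set.univ (φ i))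
    (C' : Set (Fin n → ℝ))
    (hC' : C' = {x : Fin n → ℝ | (∑ i, x i) = R ∧
      ∀ j, L j ≤ ∑ i ∈ Nset j, x i ∧ (∑ i ∈ Nset j, x i) ≤ U j})
    (x : Fin n → ℝ) (hx : x ∈ C')
    (hcond : ∀ i k : Fin n, i ≠ k →
      (∃ ε : ℝ, 0 < ε ∧ x + ε • (Pi.single k (1 : ℝ) - Pi.single i (1 : ℝ)) ∈ C') →
      leftDeriv (φ i) (x i) ≤ rightDeriv (φ k) (x k)) :
    ∀ z ∈ C', ∑ i, φ i (x i) ≤ ∑ i, φ i (z i) := by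
  classical
  subst hC'
  intro z hz
  let 𝒮 := univ.image Nset ∪ univ.image singleton
  have hN : ∀ j, Nset j ∈ 𝒮 := fun j => mem_union_left _ (mem_image_of_mem _ (mem_univ j))
  have hsingle : ∀ p, {p} ∈ 𝒮 := fun p => mem_union_right _ (mem_image_of_mem _ (mem_univ p))
  let d := z - x
  -- A subgradient of `φ p` at `x p`, one-sided in the direction of `z p`.
  let g : Fin n → ℝ := fun p => if d p < 0 then leftDeriv (φ p) (x p) else rightDeriv (φ p) (x p)
  have hsub : ∀ p, φ p (x p) + g p * d p ≤ φ p (z p) := fun p => by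
    by_cases hp : d p < 0
    · simp only [g, if_pos hp]
      exact (hφ p).add_leftDeriv_mul_sub_le (sub_neg.1 hp).le
    · simp only [g, if_neg hp]
      exact (hφ p).add_rightDeriv_mul_sub_le (sub_nonneg.1 (not_lt.1 hp))
  have hg : ∀ i k, IsExchangePair 𝒮 d i k → g i ≤ g k := fun i k h => by
    have hi : d i < 0 := by
      simpa using (h.2 _ (hsingle i)).2 (mem_singleton_self i) (by simpa using h.1.symm)
    have hk : 0 < d k := by
      simpa using (h.2 _ (hsingle k)).1 (mem_singleton_self k) (by simpa using h.1)
    simpa [g, hi, not_lt.2 hk.le] using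
      hcond i k h.1 (h.exists_add_smul_mem_blockPolytope hN (hsingle i) hx hz)
  have hgd := (isLaminar_image hlam).union_singletons.sum_mul_nonneg_of_isExchangePair hsingle
    (by simp [d, sum_sub_distrib, hx.1, hz.1]) hg
  calc ∑ p, φ p (x p) ≤ ∑ p, (φ p (x p) + g p * d p) := by
        rw [sum_add_distrib]; linarith
    _ ≤ ∑ p, φ p (z p) := sum_le_sum fun p _ => hsub p
end

section
/- Let φᵢ : ℝ → ℝ be convex for i = 1,…,n, let x, z ∈ ℝⁿ, and suppose z - x = ∑_{(i,k)∈P} λ_{ik}(eᵏ - eⁱ) with λ_{ik} > 0 for all (i,k) ∈ P, where indices appearing as first components of pairs in P are disjoint from indices appearing as second components. If φₖ⁺(xₖ) ≥ φᵢ⁻(xᵢ) for all (i,k) ∈ P, then ∑ᵢ φᵢ(zᵢ) ≥ ∑ᵢ φᵢ(xᵢ). -/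
namespace ConvexOn

variable {S : Set ℝ} {f : ℝ → ℝ} {a b : ℝ}

lemma rightDeriv_mul_sub_le (hf : ConvexOn ℝ S f) (ha : a ∈ interior S) (hb : b ∈ S)
    (hab : a ≤ b) : rightDeriv f a * (b - a) ≤ f b - f a := by
  rcases hab.eq_or_lt with rfl | hlt
  · simp
  have hslope : rightDeriv f a ≤ slope f a b := hf.rightDeriv_le_slope_of_mem_interior ha hb hlt
  rwa [slope_def_field, le_div_iff₀ (sub_pos.2 hlt)] at hslope

lemma leftDeriv_mul_sub_le (hf : ConvexOn ℝ S f) (ha : a ∈ interior S) (hb : b ∈ S)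
    (hba : b ≤ a) : leftDeriv f a * (b - a) ≤ f b - f a := by
  rcases hba.eq_or_lt with rfl | hlt
  · simp
  have hslope : slope f b a ≤ leftDeriv f a := hf.slope_le_leftDeriv_of_mem_interior hb ha hlt
  rw [slope_def_field, div_le_iff₀ (sub_pos.2 hlt)] at hslope
  linarith

end ConvexOn

section Exchange

variable {ι : Type*} [DecidableEq ι]

noncomputable def exchange (P : Finset (ι × ι)) (lam : ι × ι → ℝ) : ι → ℝ :=
  ∑ p ∈ P, lam p • (Pi.single p.2 (1 : ℝ) - Pi.single p.1 (1 : ℝ))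

variable {P : Finset (ι × ι)} {lam : ι × ι → ℝ}

lemma exchange_apply (P : Finset (ι × ι)) (lam : ι × ι → ℝ) (i : ι) :
    exchange P lam i = ∑ p ∈ P with p.2 = i, lam p - ∑ p ∈ P with p.1 = i, lam p := by
  simp only [exchange, Finset.sum_apply, Pi.smul_apply, Pi.sub_apply, Pi.single_apply,
    smul_eq_mul, mul_sub, mul_ite, mul_one, mul_zero, Finset.sum_sub_distrib,
    Finset.sum_ite, Finset.sum_const_zero, add_zero, eq_comm (a := i)]

lemma dotProduct_exchange [Fintype ι] (D : ι → ℝ) (P : Finset (ι × ι)) (lam : ι × ι → ℝ) :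
    D ⬝ᵥ exchange P lam = ∑ p ∈ P, lam p * (D p.2 - D p.1) := by
  simp only [exchange, dotProduct_sum, dotProduct_smul, dotProduct_sub, dotProduct_single,
    mul_one, smul_eq_mul]

lemma exchange_apply_nonneg (hlam : ∀ p ∈ P, 0 ≤ lam p) {i : ι} (hi : ∀ p ∈ P, p.1 ≠ i) :
    0 ≤ exchange P lam i := by
  rw [exchange_apply, Finset.filter_false_of_mem hi, Finset.sum_empty, sub_zero]
  exact Finset.sum_nonneg fun p hp => hlam p (Finset.mem_filter.1 hp).1

lemma exchange_apply_neg (hlam : ∀ p ∈ P, 0 < lam p) {q : ι × ι} (hq : q ∈ P)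
    (hi : ∀ p ∈ P, p.2 ≠ q.1) : exchange P lam q.1 < 0 := by
  rw [exchange_apply, Finset.filter_false_of_mem hi, Finset.sum_empty, zero_sub, neg_neg_iff_pos]
  exact Finset.sum_pos (fun p hp => hlam p (Finset.mem_filter.1 hp).1)
    ⟨q, Finset.mem_filter.2 ⟨hq, rfl⟩⟩

end Exchange

theorem key_subgradient_inequality {n : ℕ}
    (φ : Fin n → ℝ → ℝ) (hφ : ∀ i, ConvexOn ℝ Set.univ (φ i))
    (x z : Fin n → ℝ)
    (P : Finset (Fin n × Fin n)) (lam : Fin n × Fin n → ℝ)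
    (hlam : ∀ p ∈ P, 0 < lam p)
    (hdecomp : z - x = ∑ p ∈ P, lam p • (Pi.single p.2 (1 : ℝ) - Pi.single p.1 (1 : ℝ)))
    -- first components of pairs in P are disjoint from second components
    (hdisj : ∀ p ∈ P, ∀ q ∈ P, p.1 ≠ q.2)
    (hcond : ∀ p ∈ P, leftDeriv (φ p.1) (x p.1) ≤ rightDeriv (φ p.2) (x p.2)) :
    ∑ i, φ i (x i) ≤ ∑ i, φ i (z i) := by
  change z - x = exchange P lam at hdecomp
  have hsink (p) (hp : p ∈ P) : x p.2 ≤ z p.2 := by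
    have := exchange_apply_nonneg (fun q hq => (hlam q hq).le) fun q hq => hdisj q hq p hp
    rw [← hdecomp, Pi.sub_apply] at this
    linarith
  have hsource (p) (hp : p ∈ P) : z p.1 < x p.1 := by
    have := exchange_apply_neg hlam hp fun q hq => (hdisj p hp q hq).symm
    rw [← hdecomp, Pi.sub_apply] at this
    linarith
  let D i := if x i ≤ z i then rightDeriv (φ i) (x i) else leftDeriv (φ i) (x i)
  have hD (p) (hp : p ∈ P) : D p.1 ≤ D p.2 := by
    simpa [D, hsink p hp, not_le.2 (hsource p hp)] using hcond p hp
  have hsubgrad : D ⬝ᵥ (z - x) ≤ ∑ i, (φ i (z i) - φ i (x i)) := by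
    refine Finset.sum_le_sum fun i _ => ?_
    simp only [D, Pi.sub_apply]
    split_ifs with h
    · exact (hφ i).rightDeriv_mul_sub_le (by simp) (Set.mem_univ _) h
    · exact (hφ i).leftDeriv_mul_sub_le (by simp) (Set.mem_univ _) (not_le.1 h).le
  have hpairs : 0 ≤ D ⬝ᵥ (z - x) := by
    rw [hdecomp, dotProduct_exchange]
    exact Finset.sum_nonneg fun p hp => mul_nonneg (hlam p hp).le (sub_nonneg.2 (hD p hp))
  rw [Finset.sum_sub_distrib] at hsubgrad
  linarith
end
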